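/- arXiv:2110.09616 — 2 statements merged into one kernel-verified Lean document; each statement's English description precedes it below -/
import Mathlib

section
/- Let X and Y be n×s complex matrices, each with orthonormal columns. Then ‖X − Y Yᴴ X‖₂ = ‖X Xᴴ − Y Yᴴ‖₂, i.e., the spectral norm of X minus the orthogonal projection of X onto the column space of Y equals the spectral norm of the difference of the two orthogonal projections. -/
/-!
For projections `P = X Xᴴ` and `Q = Y Yᴴ` one has `‖P - Q‖ = max ‖(1 - Q) P‖ ‖Q (1 - P)‖`: the two
terms of `P - Q = (1 - Q) P - Q (1 - P)` have orthogonal ranges and live on the complementary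
corners `P` and `1 - P`, so `(P - Q)ᴴ (P - Q) ≤ r² P + r² (1 - P) = r²`, `r` being that maximum.
As `X` is an isometry, `‖(1 - Q) P‖ = ‖(1 - Q) X‖ = ‖X - Y Yᴴ X‖`; likewise
`‖Q (1 - P)‖ = ‖(1 - P) Y‖`. With `M = Yᴴ X`, `‖(1 - Q) X‖² = ‖1 - Mᴴ M‖` and
`‖(1 - P) Y‖² = ‖1 - M Mᴴ‖`, which agree since `Mᴴ M` and `M Mᴴ` have the same spectrum.
-/

open scoped Matrix Matrix.Norms.L2Operator

/-- Spectral (operator 2-) norm of a complex matrix: the operator norm induced by the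
Euclidean norms on the domain and codomain. -/
noncomputable def specNorm {m n : Type*} [Fintype m] [Fintype n] [DecidableEq n]
    (A : Matrix m n ℂ) : ℝ := ‖A‖

/-- The singular values (unordered, indexed by the column index type) of a complex matrix:
the square roots of the eigenvalues of the Hermitian matrix `Aᴴ * A`. -/
noncomputable def singularValues {m n : Type*} [Fintype m] [Fintype n] [DecidableEq n]
    (A : Matrix m n ℂ) : n → ℝ :=
  fun i => Real.sqrt ((Matrix.isHermitian_conjTranspose_mul_self A).eigenvalues i)

open scoped MatrixOrder

lemma IsSelfAdjoint.norm_mul_comm {A : Type*} [NonUnitalNormedRing A] [StarRing A]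
    [NormedStarGroup A] {a b : A} (ha : IsSelfAdjoint a) (hb : IsSelfAdjoint b) :
    ‖a * b‖ = ‖b * a‖ := by
  rw [← norm_star, star_mul, ha.star_eq, hb.star_eq]

lemma IsSelfAdjoint.norm_eq_of_spectrum_eq {A : Type*} [CStarAlgebra A] {a b : A}
    (ha : IsSelfAdjoint a) (hb : IsSelfAdjoint b) (h : spectrum ℂ a = spectrum ℂ b) :
    ‖a‖ = ‖b‖ := by
  have := ha.spectralRadius_eq_nnnorm
  rw [spectralRadius, h, ← spectralRadius, hb.spectralRadius_eq_nnnorm] at this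
  exact congrArg NNReal.toReal (ENNReal.coe_injective this).symm

namespace IsStarProjection

variable {A : Type*} [CStarAlgebra A] {p q : A}

lemma max_norm_le_norm_sub (hp : IsStarProjection p) :
    max ‖(1 - q) * p‖ ‖q * (1 - p)‖ ≤ ‖p - q‖ := by
  have ha : (1 - q) * p = (p - q) * p := by
    rw [sub_mul, sub_mul, one_mul, hp.isIdempotentElem.eq]
  have hb : q * (1 - p) = -((p - q) * (1 - p)) := by
    rw [sub_mul, hp.mul_one_sub_self]; noncomm_ring
  refine max_le ?_ ?_
  · rw [ha]
    exact (norm_mul_le _ _).trans (mul_le_of_le_one_right (norm_nonneg _) (hp.norm_le p))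
  · rw [hb, norm_neg]
    exact (norm_mul_le _ _).trans
      (mul_le_of_le_one_right (norm_nonneg _) (hp.one_sub.norm_le _))

variable [PartialOrder A] [StarOrderedRing A]

lemma norm_sub_le_max (hp : IsStarProjection p) (hq : IsStarProjection q) :
    ‖p - q‖ ≤ max ‖(1 - q) * p‖ ‖q * (1 - p)‖ := by
  set a := (1 - q) * p
  set b := q * (1 - p)
  set r := max ‖a‖ ‖b‖
  have hr : 0 ≤ r := (norm_nonneg a).trans (le_max_left _ _)
  have star_mul_self_le : ∀ c : A, ‖c‖ ≤ r → star c * c ≤ algebraMap ℝ A (r ^ 2) := fun c hc =>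
    (CStarAlgebra.norm_le_iff_le_algebraMap _ (sq_nonneg r) (star_mul_self_nonneg c)).mp <| by
      rw [CStarRing.norm_star_mul_self, ← sq]; gcongr
  have hpq : p - q = a - b := by simp only [a, b]; noncomm_ring
  have hab : star a * b = 0 := by
    simp only [a, b, star_mul, star_sub, star_one, hp.isSelfAdjoint.star_eq,
      hq.isSelfAdjoint.star_eq, mul_assoc]
    rw [← mul_assoc (1 - q), hq.one_sub_mul_self, zero_mul, mul_zero]
  have hba : star b * a = 0 := by simpa using congrArg star hab
  have hap : a * p = a := by simp only [a, mul_assoc, hp.isIdempotentElem.eq]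
  have hbp : b * (1 - p) = b := by simp only [b, mul_assoc, hp.one_sub.isIdempotentElem.eq]
  have har : ‖a‖ ≤ r := le_max_left _ _
  have hbr : ‖b‖ ≤ r := le_max_right _ _
  clear_value r a b
  have hcorners :
      star (a - b) * (a - b) = p * (star a * a) * p + (1 - p) * (star b * b) * (1 - p) := by
    have hsa : star a * a = p * (star a * a) * p := by
      calc star a * a = star (a * p) * (a * p) := by rw [hap]
        _ = _ := by rw [star_mul, hp.isSelfAdjoint.star_eq]; noncomm_ring
    have hsb : star b * b = (1 - p) * (star b * b) * (1 - p) := by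
      calc star b * b = star (b * (1 - p)) * (b * (1 - p)) := by rw [hbp]
        _ = _ := by rw [star_mul, hp.one_sub.isSelfAdjoint.star_eq]; noncomm_ring
    rw [star_sub, sub_mul, mul_sub, mul_sub, hab, hba, ← hsa, ← hsb]; abel
  have hle : star (p - q) * (p - q) ≤ algebraMap ℝ A (r ^ 2) := by
    calc star (p - q) * (p - q)
        ≤ p * algebraMap ℝ A (r ^ 2) * p + (1 - p) * algebraMap ℝ A (r ^ 2) * (1 - p) := by
          rw [hpq, hcorners]
          gcongr
          · exact hp.isSelfAdjoint.conjugate_le_conjugate (star_mul_self_le a har)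
          · exact hp.one_sub.isSelfAdjoint.conjugate_le_conjugate (star_mul_self_le b hbr)
      _ = algebraMap ℝ A (r ^ 2) := by
          simp only [← Algebra.commutes, mul_assoc, hp.isIdempotentElem.eq,
            hp.one_sub.isIdempotentElem.eq, ← mul_add, add_sub_cancel, mul_one]
  have := (CStarAlgebra.norm_le_iff_le_algebraMap _ (sq_nonneg r) (star_mul_self_nonneg _)).mpr hle
  rw [CStarRing.norm_star_mul_self, ← sq] at this
  exact (pow_le_pow_iff_left₀ (norm_nonneg _) hr two_ne_zero).mp this

theorem norm_sub_eq_max (hp : IsStarProjection p) (hq : IsStarProjection q) :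
    ‖p - q‖ = max ‖(1 - q) * p‖ ‖q * (1 - p)‖ :=
  le_antisymm (hp.norm_sub_le_max hq) hp.max_norm_le_norm_sub

end IsStarProjection

namespace Matrix

variable {m n : Type*} [Fintype m] [Fintype n] [DecidableEq n]

lemma spectrum_mul_comm {K : Type*} [Field K] (A B : Matrix n n K) :
    spectrum K (A * B) = spectrum K (B * A) := by
  ext r
  simp only [mem_spectrum_iff_isRoot_charpoly, charpoly_mul_comm]

-- Fails in infinite dimension: for the unilateral shift `S`, `1 - S⋆S = 0` but `1 - SS⋆ ≠ 0`.
lemma l2_opNorm_one_sub_conjTranspose_mul_self_comm (M : Matrix n n ℂ) :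
    ‖1 - Mᴴ * M‖ = ‖1 - M * Mᴴ‖ := by
  refine IsSelfAdjoint.norm_eq_of_spectrum_eq (.sub (.one _) (.star_mul_self M))
    (.sub (.one _) (.mul_star_self M)) ?_
  rw [← map_one (algebraMap ℂ _), ← spectrum.singleton_sub_eq, ← spectrum.singleton_sub_eq,
    spectrum_mul_comm]

variable {𝕜 : Type*} [RCLike 𝕜]

lemma l2_opNorm_le_one_of_conjTranspose_mul_self_eq_one {X : Matrix m n 𝕜}
    (hX : Xᴴ * X = 1) : ‖X‖ ≤ 1 := by
  have h := l2_opNorm_conjTranspose_mul_self X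
  rw [hX] at h
  nlinarith [IsStarProjection.norm_le (1 : Matrix n n 𝕜) (.one _), norm_nonneg X]

lemma isStarProjection_mul_conjTranspose_self {X : Matrix m n 𝕜} (hX : Xᴴ * X = 1) :
    IsStarProjection (X * Xᴴ) where
  isIdempotentElem := by
    rw [IsIdempotentElem, Matrix.mul_assoc, ← Matrix.mul_assoc Xᴴ, hX, Matrix.one_mul]
  isSelfAdjoint := by simp [IsSelfAdjoint, star_eq_conjTranspose]

lemma l2_opNorm_mul_mul_conjTranspose_self [DecidableEq m] {l : Type*} [Fintype l]
    {X : Matrix m n 𝕜} (hX : Xᴴ * X = 1) (A : Matrix l m 𝕜) : ‖A * X * Xᴴ‖ = ‖A * X‖ := by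
  have hX_le := l2_opNorm_le_one_of_conjTranspose_mul_self_eq_one hX
  refine le_antisymm ?_ ?_
  · calc ‖A * X * Xᴴ‖ ≤ ‖A * X‖ * ‖Xᴴ‖ := l2_opNorm_mul _ _
      _ ≤ ‖A * X‖ := by
        rw [l2_opNorm_conjTranspose]; exact mul_le_of_le_one_right (norm_nonneg _) hX_le
  · calc ‖A * X‖ = ‖A * X * Xᴴ * X‖ := by rw [Matrix.mul_assoc _ Xᴴ, hX, Matrix.mul_one]
      _ ≤ ‖A * X * Xᴴ‖ * ‖X‖ := l2_opNorm_mul _ _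
      _ ≤ ‖A * X * Xᴴ‖ := mul_le_of_le_one_right (norm_nonneg _) hX_le

lemma conjTranspose_mul_self_one_sub_mul [DecidableEq m] {X Y : Matrix m n 𝕜}
    (hX : Xᴴ * X = 1) (hY : Yᴴ * Y = 1) :
    ((1 - Y * Yᴴ) * X)ᴴ * ((1 - Y * Yᴴ) * X) = 1 - (Yᴴ * X)ᴴ * (Yᴴ * X) := by
  have hQ := (isStarProjection_mul_conjTranspose_self hY).one_sub
  rw [conjTranspose_mul, ← star_eq_conjTranspose (1 - _), hQ.isSelfAdjoint.star_eq,
    Matrix.mul_assoc, ← Matrix.mul_assoc (1 - _), hQ.isIdempotentElem.eq]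
  simp only [conjTranspose_mul, conjTranspose_conjTranspose, Matrix.mul_sub, Matrix.sub_mul,
    Matrix.one_mul, Matrix.mul_assoc, hX]

lemma l2_opNorm_one_sub_mul_conjTranspose_self_mul_comm [DecidableEq m] {X Y : Matrix m n ℂ}
    (hX : Xᴴ * X = 1) (hY : Yᴴ * Y = 1) : ‖(1 - Y * Yᴴ) * X‖ = ‖(1 - X * Xᴴ) * Y‖ := by
  rw [← mul_self_inj (norm_nonneg _) (norm_nonneg _), ← l2_opNorm_conjTranspose_mul_self,
    ← l2_opNorm_conjTranspose_mul_self, conjTranspose_mul_self_one_sub_mul hX hY,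
    conjTranspose_mul_self_one_sub_mul hY hX]
  simpa [conjTranspose_mul] using l2_opNorm_one_sub_conjTranspose_mul_self_comm (Yᴴ * X)

end Matrix

open Matrix in
/-- For `n × s` complex matrices `X`, `Y` with orthonormal columns,
`‖X − Y Yᴴ X‖₂ = ‖X Xᴴ − Y Yᴴ‖₂`. -/
theorem norm_sub_projection_eq_norm_proj_sub (n s : ℕ)
    (X Y : Matrix (Fin n) (Fin s) ℂ) (hX : Xᴴ * X = 1) (hY : Yᴴ * Y = 1) :
    specNorm (X - Y * Yᴴ * X) = specNorm (X * Xᴴ - Y * Yᴴ) := by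
  have hP := isStarProjection_mul_conjTranspose_self hX
  have hQ := isStarProjection_mul_conjTranspose_self hY
  have hX_side : ‖(1 - Y * Yᴴ) * (X * Xᴴ)‖ = ‖X - Y * Yᴴ * X‖ := by
    rw [← Matrix.mul_assoc, l2_opNorm_mul_mul_conjTranspose_self hX, Matrix.sub_mul,
      Matrix.one_mul]
  have hY_side : ‖Y * Yᴴ * (1 - X * Xᴴ)‖ = ‖X - Y * Yᴴ * X‖ := by
    rw [hQ.isSelfAdjoint.norm_mul_comm hP.one_sub.isSelfAdjoint, ← Matrix.mul_assoc,
      l2_opNorm_mul_mul_conjTranspose_self hY,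
      ← l2_opNorm_one_sub_mul_conjTranspose_self_mul_comm hX hY, Matrix.sub_mul, Matrix.one_mul]
  unfold specNorm
  rw [hP.norm_sub_eq_max hQ, hX_side, hY_side, max_self]
end

section
/- Let X and Y be n×s complex matrices, each with orthonormal columns, and let c₁ ≥ ⋯ ≥ c_s be the singular values of XᴴY. Then the multiset of squares of the 2s singular values of the augmented n×2s matrix [X Y] is {1 + c_i : i = 1,…,s} ∪ {1 − c_i : i = 1,…,s}. In particular, the s smallest singular values of [X Y], in non-increasing order, are √(1 − c_i) = √2·sin(θ_i/2) for i = 1,…,s, where cos θ_i = c_i. -/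
/-!
With `B = XᴴY`, the Gram matrix of `[X Y]` is the block matrix `[[1, B], [Bᴴ, 1]]`. Eliminating
the lower-left block of `t - [[1, B], [Bᴴ, 1]]` over `ℂ[t]` shows that its characteristic
polynomial is `χ_{BᴴB}((t - 1)²)`. The roots of `χ_{BᴴB}` are the `cᵢ²`, and
`(t - 1)² - cᵢ² = (t - (1 + cᵢ))(t - (1 - cᵢ))`, so the eigenvalues of the Gram matrix, which
are the squared singular values of `[X Y]`, are the `1 ± cᵢ`.
-/

open scoped Matrix Matrix.Norms.L2Operator

open Polynomial Matrix

section CharpolyFromBlocks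

variable {R m : Type*} [CommRing R] [Fintype m] [DecidableEq m]

theorem Matrix.det_scalar_sub_map_C (A : Matrix m m R) (p : R[X]) :
    (scalar m p - A.map C).det = A.charpoly.comp p := by
  rw [charpoly, ← coe_compRingHom_apply, RingHom.map_det]
  congr 1
  ext i j
  by_cases h : i = j
  · subst h; simp [charmatrix]
  · simp [charmatrix, h]

theorem Matrix.det_fromBlocks_scalar [IsDomain R] {d : R} (hd : d ≠ 0) (B C : Matrix m m R) :
    (fromBlocks (scalar m d) B C (scalar m d)).det = (scalar m (d * d) - C * B).det := by
  have hmul : fromBlocks 1 0 (-C) (scalar m d) * fromBlocks (scalar m d) B C (scalar m d) =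
      fromBlocks (scalar m d) B 0 (scalar m (d * d) - C * B) := by
    simp [fromBlocks_multiply, ← smul_eq_diagonal_mul, ← smul_eq_mul_diagonal, sub_eq_neg_add,
      ← diagonal_smul]
  have h := congrArg det hmul
  rw [det_mul, det_fromBlocks_zero₁₂, det_fromBlocks_zero₂₁, det_one, one_mul] at h
  exact mul_left_cancel₀ (by simpa using pow_ne_zero _ hd) h

theorem Matrix.charpoly_fromBlocks_one_one [IsDomain R] (B C : Matrix m m R) :
    (fromBlocks 1 B C 1).charpoly = (C * B).charpoly.comp ((X - 1) ^ 2) := by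
  have hone : charmatrix (1 : Matrix m m R) = scalar m (X - 1) := by
    simp [charmatrix, map_sub]
  rw [charpoly, charmatrix_fromBlocks, hone, det_fromBlocks_scalar (X_sub_C_ne_zero 1),
    ← det_scalar_sub_map_C, neg_mul_neg, ← Matrix.map_mul, sq]

end CharpolyFromBlocks

theorem Polynomial.X_sub_C_sq_comp_sub_one_sq {R : Type*} [CommRing R] (a : R) :
    (X - C (a ^ 2)).comp ((X - 1) ^ 2) = (X - C (1 + a)) * (X - C (1 - a)) := by
  rw [sub_comp, X_comp, C_comp]
  simp only [C_add, C_sub, C_1, C_pow]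
  ring

theorem Polynomial.roots_prod_X_sub_C_mul_X_sub_C {R ι : Type*} [CommRing R] [IsDomain R]
    (s : Finset ι) (f g : ι → R) :
    (∏ i ∈ s, (X - C (f i)) * (X - C (g i))).roots = s.val.map f + s.val.map g := by
  have h : ∏ i ∈ s, (X - C (f i)) * (X - C (g i)) =
      ((s.val.map f + s.val.map g).map fun a => X - C a).prod := by
    rw [Multiset.map_add, Multiset.prod_add, Multiset.map_map, Multiset.map_map,
      Finset.prod_mul_distrib]
    rfl
  rw [h, roots_multiset_prod_X_sub_C]

section SingularValues

variable {m n : Type*} [Fintype m] [Fintype n] [DecidableEq n]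

theorem sq_singularValues (A : Matrix m n ℂ) (i : n) :
    singularValues A i ^ 2 = (isHermitian_conjTranspose_mul_self A).eigenvalues i :=
  Real.sq_sqrt (eigenvalues_conjTranspose_mul_self_nonneg A i)

theorem charpoly_conjTranspose_mul_self (A : Matrix m n ℂ) :
    (Aᴴ * A).charpoly = ∏ i, (X - C ((singularValues A i ^ 2 : ℝ) : ℂ)) := by
  simp only [sq_singularValues]
  exact (isHermitian_conjTranspose_mul_self A).charpoly_eq

theorem roots_charpoly_conjTranspose_mul_self (A : Matrix m n ℂ) :
    (Aᴴ * A).charpoly.roots =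
      Finset.univ.val.map fun i => ((singularValues A i ^ 2 : ℝ) : ℂ) := by
  simp only [sq_singularValues]
  exact (isHermitian_conjTranspose_mul_self A).roots_charpoly_eq_eigenvalues

end SingularValues

theorem Matrix.conjTranspose_fromCols_mul_fromCols {α n s : Type*} [CommSemiring α] [StarRing α]
    [Fintype n] [DecidableEq s] {U V : Matrix n s α} (hU : Uᴴ * U = 1) (hV : Vᴴ * V = 1) :
    (fromCols U V)ᴴ * fromCols U V = fromBlocks 1 (Uᴴ * V) (Uᴴ * V)ᴴ 1 := by
  rw [conjTranspose_fromCols_eq_fromRows_conjTranspose, fromRows_mul_fromCols, hU, hV,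
    conjTranspose_mul, conjTranspose_conjTranspose]

theorem charpoly_conjTranspose_fromCols_mul_fromCols {n s : Type*} [Fintype n] [Fintype s]
    [DecidableEq s] {U V : Matrix n s ℂ} (hU : Uᴴ * U = 1) (hV : Vᴴ * V = 1) :
    ((fromCols U V)ᴴ * fromCols U V).charpoly =
      ∏ i, (X - C ((1 + singularValues (Uᴴ * V) i : ℝ) : ℂ)) *
        (X - C ((1 - singularValues (Uᴴ * V) i : ℝ) : ℂ)) := by
  rw [conjTranspose_fromCols_mul_fromCols hU hV, charpoly_fromBlocks_one_one,
    charpoly_conjTranspose_mul_self, prod_comp]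
  refine Finset.prod_congr rfl fun i _ => ?_
  push_cast
  exact X_sub_C_sq_comp_sub_one_sq _

/-- For `n × s` complex matrices `X`, `Y` with orthonormal columns and
`c i = σᵢ(XᴴY)` the singular values of `XᴴY`, the multiset of squares of the `2s`
singular values of the augmented matrix `[X Y]` is `{1 + cᵢ} ∪ {1 − cᵢ}`. -/
theorem sq_singularValues_augmented (n s : ℕ)
    (X Y : Matrix (Fin n) (Fin s) ℂ) (hX : Xᴴ * X = 1) (hY : Yᴴ * Y = 1) :
    Multiset.map (fun j : Fin s ⊕ Fin s => singularValues (Matrix.fromCols X Y) j ^ 2)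
        Finset.univ.val =
      Multiset.map (fun i : Fin s => 1 + singularValues (Xᴴ * Y) i) Finset.univ.val +
        Multiset.map (fun i : Fin s => 1 - singularValues (Xᴴ * Y) i) Finset.univ.val := by
  have hroots := roots_charpoly_conjTranspose_mul_self (fromCols X Y)
  rw [charpoly_conjTranspose_fromCols_mul_fromCols hX hY, roots_prod_X_sub_C_mul_X_sub_C]
    at hroots
  apply Multiset.map_injective Complex.ofReal_injective
  simpa only [Multiset.map_add, Multiset.map_map, Function.comp_def] using hroots.symm
end
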